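/- For every y₀ > 0 there exist constants A, C > 0 such that for all integers n ≥ 1, all real y ≥ y₀, and all s ∈ [3/4, 1], one has |(πny/6)^{−1/4}·W(πny/6, s)| ≤ C·n^A·e^{−πny/12}, and moreover the derivative in s satisfies |∂_s[(πny/6)^{−1/4}·W(πny/6, s)]| ≤ C·n^A·e^{−πny/12}. -/

import Mathlib

/-!
Substituting `t = u / x` gives `x^{-1/4} W(x, s) = e^{-x/2} Γ(s - 1/4)⁻¹ J(x, s)` with
`J(x, s) = ∫_0^∞ e^{-u} u^{-1/2} (u (1 + u/x))^{s-3/4} du`. For `x ≥ x₀` and `s` near `[3/4, 1]`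
both this integrand and its `s`-derivative are dominated by
`16 e^{-u} (u^{-3/4} + 1 + u/x₀)`, which is integrable and independent of `x`; hence `J` and
`∂ₛJ` are bounded uniformly in `x ≥ x₀`. Since `1/Γ` is entire, `s ↦ Γ(s - 1/4)⁻¹` is `C¹` and
hence bounded together with its derivative on `[3/4, 1]`. This leaves `e^{-x/2}` times a constant,
with `x = πny/6`, so one may take `A = 1`.
-/

open Real MeasureTheory

/-- The Whittaker function `W_{1/4, s-1/2}(y)` for `y > 0`, given by the integral
representation `W(y,s) = (y^s e^{−y/2}/Γ(s−1/4)) ∫_0^∞ e^{−yt} t^{s−5/4} (1+t)^{s−3/4} dt`. -/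
noncomputable def Wfun (y s : ℝ) : ℝ :=
  y ^ s * Real.exp (-y / 2) / Real.Gamma (s - 1 / 4) *
    ∫ t in Set.Ioi (0 : ℝ), Real.exp (-y * t) * t ^ (s - 5 / 4) * (1 + t) ^ (s - 3 / 4)

open Set

lemma Real.one_add_abs_log_le {v : ℝ} (hv : 0 < v) : 1 + |log v| ≤ v + v⁻¹ := by
  have h₁ := log_le_sub_one_of_pos hv
  have h₂ := log_le_sub_one_of_pos (inv_pos.2 hv)
  rw [log_inv] at h₂
  have hinv : 0 < v⁻¹ := inv_pos.2 hv
  rcases abs_cases (log v) with ⟨h, -⟩ | ⟨h, -⟩ <;> linarith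

lemma Real.rpow_le_rpow_add_rpow {q a p r : ℝ} (hq : 0 < q) (hpa : p ≤ a) (har : a ≤ r) :
    q ^ a ≤ q ^ p + q ^ r := by
  rcases le_total q 1 with h | h
  · linarith [rpow_le_rpow_of_exponent_ge hq h hpa, rpow_nonneg hq.le r]
  · linarith [rpow_le_rpow_of_exponent_le h har, rpow_nonneg hq.le p]

lemma Real.one_add_abs_log_le_rpow {q : ℝ} (hq : 0 < q) :
    1 + |log q| ≤ 8 * (q ^ (1 / 8 : ℝ) + q ^ (-(1 / 8) : ℝ)) := by
  have h := one_add_abs_log_le (rpow_pos_of_pos hq (1 / 8))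
  rw [log_rpow hq, abs_mul, abs_of_pos (by norm_num : (0 : ℝ) < 1 / 8), ← rpow_neg hq.le] at h
  linarith [abs_nonneg (log q)]

lemma Real.rpow_mul_one_add_abs_log_le {q σ : ℝ} (hq : 0 < q)
    (hσ : σ ∈ Icc (-(1 / 8) : ℝ) (3 / 8)) :
    q ^ σ * (1 + |log q|) ≤ 16 * (q ^ (-(1 / 4) : ℝ) + q ^ (1 / 2 : ℝ)) := by
  have hup := rpow_le_rpow_add_rpow (p := -(1 / 4)) (r := 1 / 2) (a := σ + 1 / 8) hq
    (by linarith [hσ.1]) (by linarith [hσ.2])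
  have hdown := rpow_le_rpow_add_rpow (p := -(1 / 4)) (r := 1 / 2) (a := σ + -(1 / 8)) hq
    (by linarith [hσ.1]) (by linarith [hσ.2])
  calc q ^ σ * (1 + |log q|) ≤ q ^ σ * (8 * (q ^ (1 / 8 : ℝ) + q ^ (-(1 / 8) : ℝ))) :=
        mul_le_mul_of_nonneg_left (one_add_abs_log_le_rpow hq) (rpow_nonneg hq.le σ)
    _ = 8 * (q ^ (σ + 1 / 8) + q ^ (σ + -(1 / 8))) := by rw [rpow_add hq, rpow_add hq]; ring
    _ ≤ 16 * (q ^ (-(1 / 4) : ℝ) + q ^ (1 / 2 : ℝ)) := by linarith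

/-- `u^{s-5/4} (1 + u/x)^{s-3/4}` regrouped so that `s` enters through a single power. -/
noncomputable def whittakerKernel (x s u : ℝ) : ℝ :=
  exp (-u) * u ^ (-(1 / 2) : ℝ) * (u * (1 + u / x)) ^ (s - 3 / 4)

noncomputable def whittakerMajorant (x₀ u : ℝ) : ℝ :=
  16 * exp (-u) * (u ^ (-(3 / 4) : ℝ) + 1 + u / x₀)

lemma integrableOn_whittakerMajorant (x₀ : ℝ) : IntegrableOn (whittakerMajorant x₀) (Ioi 0) := by
  have h₁ := GammaIntegral_convergent (s := 1 / 4) (by norm_num)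
  have h₂ := GammaIntegral_convergent (s := 2) (by norm_num)
  norm_num only [rpow_one] at h₁ h₂
  have h : IntegrableOn
      (fun u => 16 * (exp (-u) * u ^ (-(3 / 4) : ℝ) + exp (-u) + exp (-u) * u / x₀)) (Ioi 0) :=
    ((h₁.add (integrableOn_exp_neg_Ioi 0)).add (h₂.div_const x₀)).const_mul 16
  refine h.congr_fun (fun u _ => ?_) measurableSet_Ioi
  rw [whittakerMajorant]
  ring

section Kernel

variable {x₀ x s u : ℝ}

lemma whittakerKernel_nonneg (hx : 0 < x) (hu : 0 < u) : 0 ≤ whittakerKernel x s u := by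
  unfold whittakerKernel; positivity

lemma measurable_whittakerKernel (x s : ℝ) : Measurable (whittakerKernel x s) := by
  unfold whittakerKernel; fun_prop

lemma hasDerivAt_whittakerKernel (hx : 0 < x) (hu : 0 < u) :
    HasDerivAt (whittakerKernel x · u) (whittakerKernel x s u * log (u * (1 + u / x))) s := by
  have hq : 0 < u * (1 + u / x) := by positivity
  have := (((hasDerivAt_id s).sub_const (3 / 4)).const_rpow hq).const_mul
    (exp (-u) * u ^ (-(1 / 2) : ℝ))
  exact this.congr_deriv (by simp only [whittakerKernel, id]; ring)

lemma whittakerKernel_mul_one_add_abs_log_le (hx₀ : 0 < x₀) (hx : x₀ ≤ x) (hu : 0 < u)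
    (hs : s ∈ Icc (5 / 8 : ℝ) (9 / 8)) :
    whittakerKernel x s u * (1 + |log (u * (1 + u / x))|) ≤ whittakerMajorant x₀ u := by
  set q := u * (1 + u / x)
  have hx' : 0 < x := hx₀.trans_le hx
  have hq : 0 < q := by positivity
  have huq : u ≤ q := le_mul_of_one_le_right hu.le (by linarith [div_pos hu hx'])
  have hsmall : u ^ (-(1 / 2) : ℝ) * q ^ (-(1 / 4) : ℝ) ≤ u ^ (-(3 / 4) : ℝ) :=
    calc u ^ (-(1 / 2) : ℝ) * q ^ (-(1 / 4) : ℝ) ≤ u ^ (-(1 / 2) : ℝ) * u ^ (-(1 / 4) : ℝ) := by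
          refine mul_le_mul_of_nonneg_left ?_ (by positivity)
          exact rpow_le_rpow_of_nonpos hu huq (by norm_num)
      _ = u ^ (-(3 / 4) : ℝ) := by rw [← rpow_add hu]; norm_num
  have hlarge : u ^ (-(1 / 2) : ℝ) * q ^ (1 / 2 : ℝ) ≤ 1 + u / x₀ :=
    calc u ^ (-(1 / 2) : ℝ) * q ^ (1 / 2 : ℝ) = (1 + u / x) ^ (1 / 2 : ℝ) := by
          rw [mul_rpow hu.le (by positivity), ← mul_assoc, ← rpow_add hu]; norm_num
      _ ≤ 1 + u / x := rpow_le_self_of_one_le (by linarith [div_pos hu hx']) (by norm_num)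
      _ ≤ 1 + u / x₀ := by gcongr
  calc whittakerKernel x s u * (1 + |log q|)
      = exp (-u) * u ^ (-(1 / 2) : ℝ) * (q ^ (s - 3 / 4) * (1 + |log q|)) := by
        rw [whittakerKernel]; ring
    _ ≤ exp (-u) * u ^ (-(1 / 2) : ℝ) * (16 * (q ^ (-(1 / 4) : ℝ) + q ^ (1 / 2 : ℝ))) := by
        refine mul_le_mul_of_nonneg_left ?_ (by positivity)
        exact rpow_mul_one_add_abs_log_le (σ := s - 3 / 4) hq
          ⟨by linarith [hs.1], by linarith [hs.2]⟩
    _ = 16 * exp (-u) * (u ^ (-(1 / 2) : ℝ) * q ^ (-(1 / 4) : ℝ)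
          + u ^ (-(1 / 2) : ℝ) * q ^ (1 / 2 : ℝ)) := by ring
    _ ≤ whittakerMajorant x₀ u := by
        rw [whittakerMajorant, add_assoc]
        gcongr

lemma norm_whittakerKernel_le (hx₀ : 0 < x₀) (hx : x₀ ≤ x) (hu : 0 < u)
    (hs : s ∈ Icc (5 / 8 : ℝ) (9 / 8)) : ‖whittakerKernel x s u‖ ≤ whittakerMajorant x₀ u := by
  have hK := whittakerKernel_nonneg (s := s) (hx₀.trans_le hx) hu
  rw [Real.norm_of_nonneg hK]
  refine le_trans ?_ (whittakerKernel_mul_one_add_abs_log_le hx₀ hx hu hs)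
  exact le_mul_of_one_le_right hK (le_add_of_nonneg_right (abs_nonneg _))

lemma norm_whittakerKernel_mul_log_le (hx₀ : 0 < x₀) (hx : x₀ ≤ x) (hu : 0 < u)
    (hs : s ∈ Icc (5 / 8 : ℝ) (9 / 8)) :
    ‖whittakerKernel x s u * log (u * (1 + u / x))‖ ≤ whittakerMajorant x₀ u := by
  have hK := whittakerKernel_nonneg (s := s) (hx₀.trans_le hx) hu
  rw [norm_mul, Real.norm_of_nonneg hK, Real.norm_eq_abs]
  refine le_trans ?_ (whittakerKernel_mul_one_add_abs_log_le hx₀ hx hu hs)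
  gcongr
  exact le_add_of_nonneg_left zero_le_one

end Kernel

noncomputable def whittakerJ (x s : ℝ) : ℝ :=
  ∫ u in Ioi 0, whittakerKernel x s u

section Integral

variable {x₀ x s : ℝ}

lemma hasDerivAt_whittakerJ (hx₀ : 0 < x₀) (hx : x₀ ≤ x) (hs : s ∈ Icc (3 / 4 : ℝ) 1) :
    HasDerivAt (whittakerJ x)
      (∫ u in Ioi 0, whittakerKernel x s u * log (u * (1 + u / x))) s := by
  have hx' : 0 < x := hx₀.trans_le hx
  have hball : ∀ s' ∈ Metric.ball s (1 / 8), s' ∈ Icc (5 / 8 : ℝ) (9 / 8) := fun s' hs' => by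
    rw [Metric.mem_ball, dist_eq, abs_sub_lt_iff] at hs'
    constructor <;> linarith [hs.1, hs.2]
  have hs' := hball s (Metric.mem_ball_self (by norm_num))
  have hint : IntegrableOn (whittakerKernel x s) (Ioi 0) :=
    (integrableOn_whittakerMajorant x₀).mono'
      (measurable_whittakerKernel x s).aestronglyMeasurable
      (ae_restrict_of_forall_mem measurableSet_Ioi fun _ hu =>
        norm_whittakerKernel_le hx₀ hx hu hs')
  exact (hasDerivAt_integral_of_dominated_loc_of_deriv_le
    (F' := fun s' u => whittakerKernel x s' u * log (u * (1 + u / x)))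
    (bound := whittakerMajorant x₀) (Metric.ball_mem_nhds s (by norm_num))
    (.of_forall fun s' => (measurable_whittakerKernel x s').aestronglyMeasurable) hint
    ((measurable_whittakerKernel x s).mul (by fun_prop)).aestronglyMeasurable
    (ae_restrict_of_forall_mem measurableSet_Ioi fun u hu s' hs' =>
      norm_whittakerKernel_mul_log_le hx₀ hx hu (hball s' hs'))
    (integrableOn_whittakerMajorant x₀)
    (ae_restrict_of_forall_mem measurableSet_Ioi fun u hu _ _ =>
      hasDerivAt_whittakerKernel hx' hu)).2

lemma abs_whittakerJ_le (hx₀ : 0 < x₀) (hx : x₀ ≤ x) (hs : s ∈ Icc (5 / 8 : ℝ) (9 / 8)) :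
    |whittakerJ x s| ≤ ∫ u in Ioi 0, whittakerMajorant x₀ u :=
  norm_integral_le_of_norm_le (integrableOn_whittakerMajorant x₀)
    (ae_restrict_of_forall_mem measurableSet_Ioi fun _ hu => norm_whittakerKernel_le hx₀ hx hu hs)

lemma abs_deriv_whittakerJ_le (hx₀ : 0 < x₀) (hx : x₀ ≤ x) (hs : s ∈ Icc (3 / 4 : ℝ) 1) :
    |deriv (whittakerJ x) s| ≤ ∫ u in Ioi 0, whittakerMajorant x₀ u := by
  rw [(hasDerivAt_whittakerJ hx₀ hx hs).deriv]
  exact norm_integral_le_of_norm_le (integrableOn_whittakerMajorant x₀)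
    (ae_restrict_of_forall_mem measurableSet_Ioi fun _ hu =>
      norm_whittakerKernel_mul_log_le hx₀ hx hu ⟨by linarith [hs.1], by linarith [hs.2]⟩)

end Integral

lemma Real.contDiff_inv_Gamma {n : WithTop ℕ∞} : ContDiff ℝ n fun s : ℝ => (Gamma s)⁻¹ := by
  have h : (fun s : ℝ => (Gamma s)⁻¹) = fun s : ℝ => ((Complex.Gamma s)⁻¹).re := by
    ext s
    rw [Complex.Gamma_ofReal, ← Complex.ofReal_inv, Complex.ofReal_re]
  rw [h]
  exact (Complex.differentiable_one_div_Gamma.contDiff).real_of_complex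

lemma ContDiff.exists_abs_le_and_abs_deriv_le {f : ℝ → ℝ} (hf : ContDiff ℝ 1 f) {K : Set ℝ}
    (hK : IsCompact K) : ∃ C, ∀ s ∈ K, |f s| ≤ C ∧ |deriv f s| ≤ C := by
  obtain ⟨C₀, h₀⟩ := hK.exists_bound_of_continuousOn hf.continuous.continuousOn
  obtain ⟨C₁, h₁⟩ := hK.exists_bound_of_continuousOn (hf.continuous_deriv le_rfl).continuousOn
  exact ⟨max C₀ C₁, fun s hs => ⟨(h₀ s hs).trans (le_max_left _ _),
    (h₁ s hs).trans (le_max_right _ _)⟩⟩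

lemma abs_deriv_mul_le {f g : ℝ → ℝ} {s a b : ℝ} (hf : DifferentiableAt ℝ f s)
    (hg : DifferentiableAt ℝ g s) (hfa : |f s| ≤ a) (hf'a : |deriv f s| ≤ a)
    (hgb : |g s| ≤ b) (hg'b : |deriv g s| ≤ b) :
    |deriv (fun t => f t * g t) s| ≤ 2 * (a * b) := by
  have ha : 0 ≤ a := (abs_nonneg _).trans hfa
  rw [deriv_fun_mul hf hg]
  calc |deriv f s * g s + f s * deriv g s| ≤ |deriv f s| * |g s| + |f s| * |deriv g s| := by
        rw [← abs_mul, ← abs_mul]; exact abs_add_le _ _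
    _ ≤ a * b + a * b := by gcongr
    _ = 2 * (a * b) := by ring

section Scaling

variable {x s : ℝ}

lemma Wfun_integrand_eq {t : ℝ} (hx : 0 < x) (ht : 0 < t) :
    exp (-x * t) * t ^ (s - 5 / 4) * (1 + t) ^ (s - 3 / 4) =
      x ^ (5 / 4 - s) * whittakerKernel x s (x * t) := by
  have hxpow : x ^ (5 / 4 - s) * x ^ (-(1 / 2) : ℝ) * x ^ (s - 3 / 4) = 1 := by
    rw [← rpow_add hx, ← rpow_add hx, show 5 / 4 - s + -(1 / 2) + (s - 3 / 4) = (0 : ℝ) by ring,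
      rpow_zero]
  have htpow : t ^ (s - 5 / 4) = t ^ (-(1 / 2) : ℝ) * t ^ (s - 3 / 4) := by
    rw [← rpow_add ht]; ring_nf
  rw [whittakerKernel, mul_div_cancel_left₀ t hx.ne', mul_assoc x t, mul_rpow hx.le ht.le,
    mul_rpow hx.le (by positivity), mul_rpow ht.le (by positivity), htpow, neg_mul]
  linear_combination
    (-(exp (-(x * t)) * t ^ (-(1 / 2) : ℝ) * t ^ (s - 3 / 4) * (1 + t) ^ (s - 3 / 4))) * hxpow

lemma setIntegral_Wfun_integrand (hx : 0 < x) :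
    ∫ t in Ioi 0, exp (-x * t) * t ^ (s - 5 / 4) * (1 + t) ^ (s - 3 / 4) =
      x ^ (1 / 4 - s) * whittakerJ x s :=
  calc _ = ∫ t in Ioi 0, x ^ (5 / 4 - s) * whittakerKernel x s (x * t) :=
        setIntegral_congr_fun measurableSet_Ioi fun _ ht => Wfun_integrand_eq hx ht
    _ = x ^ (5 / 4 - s) * x ^ (-1 : ℝ) * whittakerJ x s := by
        rw [integral_const_mul, integral_comp_mul_left_Ioi _ _ hx, mul_zero, smul_eq_mul,
          rpow_neg_one, whittakerJ, mul_assoc]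
    _ = x ^ (1 / 4 - s) * whittakerJ x s := by rw [← rpow_add hx]; ring_nf

lemma rpow_neg_quarter_mul_Wfun (hx : 0 < x) :
    x ^ (-(1 / 4) : ℝ) * Wfun x s = exp (-x / 2) * ((Gamma (s - 1 / 4))⁻¹ * whittakerJ x s) := by
  have hxpow : x ^ (-(1 / 4) : ℝ) * x ^ s * x ^ (1 / 4 - s) = 1 := by
    rw [← rpow_add hx, ← rpow_add hx, show -(1 / 4) + s + (1 / 4 - s) = (0 : ℝ) by ring, rpow_zero]
  rw [Wfun, setIntegral_Wfun_integrand hx, div_eq_mul_inv (x ^ s * exp (-x / 2))]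
  linear_combination (exp (-x / 2) * (Gamma (s - 1 / 4))⁻¹ * whittakerJ x s) * hxpow

end Scaling

lemma exists_bound_inv_Gamma_mul_whittakerJ {x₀ : ℝ} (hx₀ : 0 < x₀) :
    ∃ K, 0 ≤ K ∧ ∀ x, x₀ ≤ x → ∀ s ∈ Icc (3 / 4 : ℝ) 1,
      |(Gamma (s - 1 / 4))⁻¹ * whittakerJ x s| ≤ K ∧
      |deriv (fun t => (Gamma (t - 1 / 4))⁻¹ * whittakerJ x t) s| ≤ K := by
  have hγ : ContDiff ℝ 1 fun s : ℝ => (Gamma (s - 1 / 4))⁻¹ :=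
    contDiff_inv_Gamma.comp (contDiff_id.sub contDiff_const)
  obtain ⟨c, hc⟩ := hγ.exists_abs_le_and_abs_deriv_le (isCompact_Icc (a := 3 / 4) (b := 1))
  set B := ∫ u in Ioi 0, whittakerMajorant x₀ u
  have hc₀ : 0 ≤ c := (abs_nonneg _).trans (hc 1 ⟨by norm_num, le_rfl⟩).1
  have hB₀ : 0 ≤ B :=
    (abs_nonneg _).trans (abs_whittakerJ_le hx₀ le_rfl (s := 1) ⟨by norm_num, by norm_num⟩)
  refine ⟨2 * (c * B), by positivity, fun x hx s hs => ?_⟩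
  have hs' : s ∈ Icc (5 / 8 : ℝ) (9 / 8) := ⟨by linarith [hs.1], by linarith [hs.2]⟩
  have hval : |(Gamma (s - 1 / 4))⁻¹ * whittakerJ x s| ≤ c * B := by
    rw [abs_mul]
    exact mul_le_mul (hc s hs).1 (abs_whittakerJ_le hx₀ hx hs') (abs_nonneg _) hc₀
  refine ⟨hval.trans (by linarith [mul_nonneg hc₀ hB₀]), ?_⟩
  exact abs_deriv_mul_le ((hγ.differentiable one_ne_zero) s)
    (hasDerivAt_whittakerJ hx₀ hx hs).differentiableAt (hc s hs).1 (hc s hs).2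
    (abs_whittakerJ_le hx₀ hx hs') (abs_deriv_whittakerJ_le hx₀ hx hs)

theorem whittaker_uniform_bounds (y₀ : ℝ) (hy₀ : 0 < y₀) :
    ∃ A C : ℝ, 0 < A ∧ 0 < C ∧
      ∀ n : ℕ, 1 ≤ n → ∀ y : ℝ, y₀ ≤ y → ∀ s ∈ Set.Icc (3 / 4 : ℝ) 1,
        |(Real.pi * n * y / 6) ^ (-(1 / 4) : ℝ) * Wfun (Real.pi * n * y / 6) s| ≤
            C * (n : ℝ) ^ A * Real.exp (-(Real.pi * n * y / 12)) ∧
        |deriv (fun s' : ℝ =>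
            (Real.pi * n * y / 6) ^ (-(1 / 4) : ℝ) * Wfun (Real.pi * n * y / 6) s') s| ≤
          C * (n : ℝ) ^ A * Real.exp (-(Real.pi * n * y / 12)) := by
  have hx₀ : 0 < π * y₀ / 6 := by positivity
  obtain ⟨K, hK₀, hK⟩ := exists_bound_inv_Gamma_mul_whittakerJ hx₀
  refine ⟨1, K + 1, one_pos, by positivity, fun n hn y hy s hs => ?_⟩
  have hn' : (1 : ℝ) ≤ n := Nat.one_le_cast.2 hn
  have hx : π * y₀ / 6 ≤ π * n * y / 6 := by
    rw [mul_assoc]; gcongr; nlinarith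
  set x := π * n * y / 6
  have hexp : exp (-(π * n * y / 12)) = exp (-x / 2) := by simp only [x]; ring_nf
  have hscale : ∀ b, |b| ≤ K → |exp (-x / 2) * b| ≤ (K + 1) * n ^ (1 : ℝ) * exp (-x / 2) := by
    intro b hb
    rw [abs_mul, abs_of_pos (exp_pos _), rpow_one, mul_comm]
    gcongr
    nlinarith
  obtain ⟨hval, hder⟩ := hK x hx s hs
  simp only [rpow_neg_quarter_mul_Wfun (hx₀.trans_le hx), hexp]
  rw [deriv_const_mul_field]
  exact ⟨hscale _ hval, hscale _ hder⟩
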